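/- Every satisfiable monotone hybrid formula φ ∈ MHL(◇,□,@) with k distinct nominals and modal depth m that is satisfiable over (ℕ,<) is satisfiable in a model over (ℕ,<) in which, beyond a bounded initial segment, no nominal is true and all sufficiently large states realize the same subformulas; more precisely, there is a satisfying model (ℕ,<,η) and a bound N ≤ (k+1)·(m+1) such that, for all states u,v ≥ N and all subformulas ψ of φ, (ℕ,<,η),u ⊨ ψ iff (ℕ,<,η),v ⊨ ψ. -/

import Mathlib

/-- Monotone hybrid formulas MHL(◇,□,@) over nominals. -/
inductive HForm : Type
  | nom : ℕ → HForm
  | top : HForm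
  | bot : HForm
  | conj : HForm → HForm → HForm
  | disj : HForm → HForm → HForm
  | dia : HForm → HForm
  | box : HForm → HForm
  | at_ : ℕ → HForm → HForm
deriving DecidableEq

/-- Satisfaction in a Kripke model (W,R,η) with nominal valuation η. -/
def sat {W : Type} (R : W → W → Prop) (η : ℕ → W) (w : W) : HForm → Prop
  | .nom i => η i = w
  | .top => True
  | .bot => False
  | .conj a b => sat R η w a ∧ sat R η w b
  | .disj a b => sat R η w a ∨ sat R η w b
  | .dia a => ∃ v, R w v ∧ sat R η v a
  | .box a => ∀ v, R w v → sat R η v a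
  | .at_ i a => sat R η (η i) a

/-- Modal depth: nesting depth of ◇ and □. -/
def md : HForm → ℕ
  | .nom _ => 0
  | .top => 0
  | .bot => 0
  | .conj a b => max (md a) (md b)
  | .disj a b => max (md a) (md b)
  | .dia a => md a + 1
  | .box a => md a + 1
  | .at_ _ a => md a

/-- w is a nominal state. -/
def IsNomState {W : Type} (η : ℕ → W) (w : W) : Prop := ∃ i, η i = w

/-- δ(w) > m : for every nominal state s above w, the set of states strictly between
w and s is infinite or has more than m elements (so in particular the number of states
between w and the next nominal state above w exceeds m, or is ∞). -/
def deltaGT {W : Type} (R : W → W → Prop) (η : ℕ → W) (m : ℕ) (w : W) : Prop :=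
  ∀ s, R w s → IsNomState η s →
    ({u | R w u ∧ R u s} : Set W).Infinite ∨ m < ({u | R w u ∧ R u s} : Set W).ncard

/-- The equivalence ≡_m : equal, or both non-nominal with δ > m. -/
def equivm {W : Type} (R : W → W → Prop) (η : ℕ → W) (m : ℕ) (w w' : W) : Prop :=
  w = w' ∨ (¬IsNomState η w ∧ ¬IsNomState η w' ∧ deltaGT R η m w ∧ deltaGT R η m w')

/-- The nominals occurring in a formula. -/
def noms : HForm → Finset ℕ
  | .nom i => {i}
  | .top => ∅
  | .bot => ∅
  | .conj a b => noms a ∪ noms b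
  | .disj a b => noms a ∪ noms b
  | .dia a => noms a
  | .box a => noms a
  | .at_ i a => insert i (noms a)

/-- The subformulas of a formula (including itself). -/
def subf : HForm → Finset HForm
  | .nom i => {.nom i}
  | .top => {.top}
  | .bot => {.bot}
  | .conj a b => insert (.conj a b) (subf a ∪ subf b)
  | .disj a b => insert (.disj a b) (subf a ∪ subf b)
  | .dia a => insert (.dia a) (subf a)
  | .box a => insert (.box a) (subf a)
  | .at_ i a => insert (.at_ i a) (subf a)

/-!
Two models over `(ℕ,<)` satisfy the same formulas of modal depth `≤ d` with nominals in `ns` at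
`u` and `u'` as soon as the nominals of `ns` look alike from `u` and from `u'`, forward distances
being truncated at `d + 1` (`ProfileEq`): modalities only look forward, so a back-and-forth
argument applies. Given a model of `φ` at `w`, keep only the states at most `md φ` steps below `w`
or below a nominal of `φ`, and renumber them consecutively (`compress`). Gaps between the marked
states shrink, but not below `md φ + 1`, so profiles are preserved; at most `(k + 1)(md φ + 1)`
states are kept, and every nominal lands below that bound. Beyond the last nominal every state
has the same profile, hence satisfies the same subformulas.
-/

open Finset

/-- The nominals of `ns` look alike from `u` in `η` and from `u'` in `η'`. As `η i - u` truncates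
to `0` exactly when `η i ≤ u`, the second conjunct says that `η i` lies ahead of `u` iff `η' i`
lies ahead of `u'`, and then at the same distance up to `d + 1`. -/
def ProfileEq (ns : Finset ℕ) (η η' : ℕ → ℕ) (d u u' : ℕ) : Prop :=
  ∀ i ∈ ns, (η i = u ↔ η' i = u') ∧ min (η i - u) (d + 1) = min (η' i - u') (d + 1)

namespace ProfileEq

variable {ns : Finset ℕ} {η η' : ℕ → ℕ} {d e m u u' v : ℕ}

theorem refl (ns : Finset ℕ) (η : ℕ → ℕ) (d u : ℕ) : ProfileEq ns η η d u u :=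
  fun _ _ => ⟨Iff.rfl, rfl⟩

theorem symm (h : ProfileEq ns η η' d u u') : ProfileEq ns η' η d u' u :=
  fun i hi => ⟨(h i hi).1.symm, (h i hi).2.symm⟩

theorem mono (h : ProfileEq ns η η' d u u') (hed : e ≤ d) : ProfileEq ns η η' e u u' := by
  intro i hi
  obtain ⟨h₁, h₂⟩ := h i hi
  exact ⟨h₁, by omega⟩

theorem of_forall_lt (hu : ∀ i ∈ ns, η i < u) (hu' : ∀ i ∈ ns, η' i < u') :
    ProfileEq ns η η' d u u' := by
  intro i hi
  have := hu i hi
  have := hu' i hi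
  exact ⟨by omega, by omega⟩

/-- A move from `u` to a later `v` is answered by a move from `u'`: to the same nominal if `v` is
one, to the same truncated distance below the next nominal otherwise, and beyond all nominals if
there is no next one. -/
theorem forth (hnom : ∀ i ∈ ns, ProfileEq ns η η' m (η i) (η' i)) (hem : e < m)
    (h : ProfileEq ns η η' (e + 1) u u') (huv : u < v) :
    ∃ v', u' < v' ∧ ProfileEq ns η η' e v v' := by
  by_cases hv : ∃ i ∈ ns, η i = v
  · obtain ⟨i, hi, rfl⟩ := hv
    have := (h i hi).2
    exact ⟨η' i, by omega, (hnom i hi).mono hem.le⟩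
  push Not at hv
  by_cases hup : ∃ i ∈ ns, v < η i
  · obtain ⟨i₀, hi₀, hvi₀⟩ := hup
    obtain ⟨j, hj, hjmin⟩ := (ns.filter (v < η ·)).exists_min_image η
      ⟨i₀, mem_filter.2 ⟨hi₀, hvi₀⟩⟩
    obtain ⟨hj, hvj⟩ := mem_filter.1 hj
    have huj := (h j hj).2
    refine ⟨η' j - min (η j - v) (e + 1), by omega, fun i hi => ?_⟩
    have hui := (h i hi).2
    rcases lt_or_gt_of_ne (hv i hi) with hiv | hvi
    · have hij := (hnom i hi j hj).2
      exact ⟨by omega, by omega⟩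
    · have hji := hnom j hj i hi
      have := hjmin i (mem_filter.2 ⟨hi, hvi⟩)
      exact ⟨by omega, by omega⟩
  · push Not at hup
    refine ⟨u' + ns.sup η' + 1, by omega, fun i hi => ?_⟩
    have := le_sup (f := η') hi
    have := hup i hi
    have := hv i hi
    exact ⟨by omega, by omega⟩

theorem back (hnom : ∀ i ∈ ns, ProfileEq ns η η' m (η i) (η' i)) (hem : e < m)
    (h : ProfileEq ns η η' (e + 1) u u') (hv' : u' < v) :
    ∃ v', u < v' ∧ ProfileEq ns η η' e v' v :=
  let ⟨v', huv', h'⟩ := forth (fun i hi => (hnom i hi).symm) hem h.symm hv'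
  ⟨v', huv', h'.symm⟩

end ProfileEq

theorem sat_iff_of_profileEq {ns : Finset ℕ} {η η' : ℕ → ℕ} {m : ℕ}
    (hnom : ∀ i ∈ ns, ProfileEq ns η η' m (η i) (η' i)) {ψ : HForm} (hψ : noms ψ ⊆ ns) :
    ∀ {d u u' : ℕ}, md ψ ≤ d → d ≤ m → ProfileEq ns η η' d u u' →
      (sat (· < ·) η u ψ ↔ sat (· < ·) η' u' ψ) := by
  induction ψ with
  | nom i => exact fun _ _ h => (h i (hψ (mem_singleton_self i))).1
  | top | bot => exact fun _ _ _ => Iff.rfl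
  | conj a b iha ihb =>
    obtain ⟨ha, hb⟩ := union_subset_iff.1 hψ
    exact fun hd hdm h => and_congr (iha ha (le_of_max_le_left hd) hdm h)
      (ihb hb (le_of_max_le_right hd) hdm h)
  | disj a b iha ihb =>
    obtain ⟨ha, hb⟩ := union_subset_iff.1 hψ
    exact fun hd hdm h => or_congr (iha ha (le_of_max_le_left hd) hdm h)
      (ihb hb (le_of_max_le_right hd) hdm h)
  | dia a ih =>
    intro d u u' hd hdm h
    obtain ⟨e, rfl⟩ : ∃ e, d = e + 1 := ⟨d - 1, by simp only [md] at hd; omega⟩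
    have hae : md a ≤ e := by simp only [md] at hd; omega
    constructor
    · rintro ⟨v, huv, hv⟩
      obtain ⟨v', hv', h'⟩ := h.forth hnom (by omega) huv
      exact ⟨v', hv', (ih hψ hae (by omega) h').1 hv⟩
    · rintro ⟨v', hv', hv⟩
      obtain ⟨v, huv, h'⟩ := h.back hnom (by omega) hv'
      exact ⟨v, huv, (ih hψ hae (by omega) h').2 hv⟩
  | box a ih =>
    intro d u u' hd hdm h
    obtain ⟨e, rfl⟩ : ∃ e, d = e + 1 := ⟨d - 1, by simp only [md] at hd; omega⟩
    have hae : md a ≤ e := by simp only [md] at hd; omega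
    constructor
    · intro hall v' hv'
      obtain ⟨v, huv, h'⟩ := h.back hnom (by omega) hv'
      exact (ih hψ hae (by omega) h').1 (hall v huv)
    · intro hall v huv
      obtain ⟨v', hv', h'⟩ := h.forth hnom (by omega) huv
      exact (ih hψ hae (by omega) h').2 (hall v' hv')
  | at_ i a ih =>
    obtain ⟨hi, ha⟩ := insert_subset_iff.1 hψ
    exact fun hd hdm _ => ih ha hd hdm ((hnom i hi).mono hdm)

theorem sat_iff_of_forall_lt (η : ℕ → ℕ) (ψ : HForm) {u v : ℕ}
    (hu : ∀ i ∈ noms ψ, η i < u) (hv : ∀ i ∈ noms ψ, η i < v) :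
    sat (· < ·) η u ψ ↔ sat (· < ·) η v ψ :=
  sat_iff_of_profileEq (fun i _ => .refl _ η _ (η i)) subset_rfl le_rfl le_rfl
    (.of_forall_lt hu hv)

theorem noms_subset_of_mem_subf {φ ψ : HForm} (h : ψ ∈ subf φ) : noms ψ ⊆ noms φ := by
  induction φ with
  | nom | top | bot => simp_all [subf]
  | conj a b iha ihb | disj a b iha ihb =>
    simp only [subf, mem_insert, mem_union] at h
    rcases h with rfl | h | h
    · exact subset_rfl
    · exact (iha h).trans subset_union_left
    · exact (ihb h).trans subset_union_right
  | dia a ih | box a ih =>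
    simp only [subf, mem_insert] at h
    rcases h with rfl | h
    · exact subset_rfl
    · exact ih h
  | at_ i a ih =>
    simp only [subf, mem_insert] at h
    rcases h with rfl | h
    · exact subset_rfl
    · exact (ih h).trans (subset_insert _ _)

def nbhd (S : Finset ℕ) (m : ℕ) : Finset ℕ :=
  S.biUnion fun s => Icc (s - m) s

def compress (S : Finset ℕ) (m x : ℕ) : ℕ :=
  #((nbhd S m).filter (· < x))

section Compress

variable {S : Finset ℕ} {m x y : ℕ}

theorem mem_nbhd : x ∈ nbhd S m ↔ ∃ s ∈ S, x ≤ s ∧ s ≤ x + m := by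
  simp only [nbhd, mem_biUnion, mem_Icc]
  exact exists_congr fun s => and_congr_right fun _ => by omega

theorem mem_nbhd_of_mem (hx : x ∈ S) : x ∈ nbhd S m :=
  mem_nbhd.2 ⟨x, hx, le_rfl, by omega⟩

theorem card_nbhd_le : #(nbhd S m) ≤ #S * (m + 1) :=
  calc #(nbhd S m) ≤ ∑ s ∈ S, #(Icc (s - m) s) := card_biUnion_le
    _ ≤ ∑ _s ∈ S, (m + 1) := sum_le_sum fun s _ => by rw [Nat.card_Icc]; omega
    _ = #S * (m + 1) := by rw [sum_const, smul_eq_mul]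

theorem compress_lt_card_nbhd (hx : x ∈ nbhd S m) : compress S m x < #(nbhd S m) :=
  card_lt_card (filter_ssubset.2 ⟨x, hx, lt_irrefl x⟩)

theorem compress_mono : Monotone (compress S m) :=
  fun _ _ hxy => card_le_card (monotone_filter_right _ fun _ _ hz => hz.trans_le hxy)

theorem compress_add_card_Ico (hxy : x ≤ y) :
    compress S m y = compress S m x + #((nbhd S m).filter (· ∈ Ico x y)) := by
  have hsplit : (nbhd S m).filter (· < y) =
      (nbhd S m).filter (· < x) ∪ (nbhd S m).filter (· ∈ Ico x y) := by
    rw [← filter_or]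
    exact filter_congr fun z _ => by rw [mem_Ico]; omega
  rw [compress, compress, hsplit, card_union_of_disjoint]
  exact disjoint_filter.2 fun z _ hzx hz => by rw [mem_Ico] at hz; omega

theorem min_compress_sub_compress (hx : x ∈ S) (hy : y ∈ S) (hxy : x ≤ y) :
    min (compress S m y - compress S m x) (m + 1) = min (y - x) (m + 1) := by
  rw [compress_add_card_Ico hxy, Nat.add_sub_cancel_left]
  have hle : #((nbhd S m).filter (· ∈ Ico x y)) ≤ y - x :=
    (card_le_card fun _ hz => (mem_filter.1 hz).2).trans_eq (Nat.card_Ico x y)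
  rcases hxy.eq_or_lt with rfl | hlt
  · simp
  -- `x` and the `m` states below `y` are kept
  have hsub : insert x (Ico (max (x + 1) (y - m)) y) ⊆ (nbhd S m).filter (· ∈ Ico x y) := by
    intro z hz
    rw [mem_insert, mem_Ico] at hz
    rw [mem_filter, mem_Ico, mem_nbhd]
    rcases hz with rfl | hz
    · exact ⟨⟨z, hx, le_rfl, by omega⟩, le_rfl, hlt⟩
    · exact ⟨⟨y, hy, by omega⟩, by omega⟩
  have hge := card_le_card hsub
  rw [card_insert_of_notMem (by rw [mem_Ico]; omega), Nat.card_Ico] at hge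
  omega

end Compress

theorem profileEq_compress {ns S : Finset ℕ} {η : ℕ → ℕ} {m x : ℕ} (hS : ∀ i ∈ ns, η i ∈ S)
    (hx : x ∈ S) : ProfileEq ns η (compress S m ∘ η) m x (compress S m x) := by
  intro i hi
  have h₁ := min_compress_sub_compress (m := m) hx (hS i hi)
  have h₂ := min_compress_sub_compress (m := m) (hS i hi) hx
  have hmono := @compress_mono S m x (η i)
  have hmono' := @compress_mono S m (η i) x
  simp only [Function.comp_apply]
  exact ⟨by omega, by omega⟩

/-- Quasi-quadratic size model property over (ℕ,<): every satisfiable φ ∈ MHL(◇,□,@)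
with k distinct nominals and modal depth m has a satisfying model over (ℕ,<) and a
bound N ≤ (k+1)·(m+1) such that all nominals of φ denote states below N and all
states ≥ N realize exactly the same subformulas of φ. -/
theorem stmt15 (φ : HForm)
    (hsat : ∃ (η : ℕ → ℕ) (w : ℕ), sat (· < ·) η w φ) :
    ∃ (η : ℕ → ℕ) (w N : ℕ), sat (· < ·) η w φ ∧
      N ≤ ((noms φ).card + 1) * (md φ + 1) ∧
      (∀ i ∈ noms φ, η i < N) ∧
      (∀ u v : ℕ, N ≤ u → N ≤ v → ∀ ψ ∈ subf φ,
        (sat (· < ·) η u ψ ↔ sat (· < ·) η v ψ)) := by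
  obtain ⟨η, w, hw⟩ := hsat
  set S := insert w ((noms φ).image η)
  have hS : ∀ i ∈ noms φ, η i ∈ S := fun i hi => mem_insert_of_mem (mem_image_of_mem η hi)
  have hwS : w ∈ S := mem_insert_self _ _
  set η' := compress S (md φ) ∘ η
  have hlt : ∀ i ∈ noms φ, η' i < #(nbhd S (md φ)) :=
    fun i hi => compress_lt_card_nbhd (mem_nbhd_of_mem (hS i hi))
  refine ⟨η', compress S (md φ) w, #(nbhd S (md φ)), ?_, ?_, hlt, ?_⟩
  · exact (sat_iff_of_profileEq (fun i hi => profileEq_compress hS (hS i hi)) subset_rfl le_rfl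
      le_rfl (profileEq_compress hS hwS)).1 hw
  · calc #(nbhd S (md φ)) ≤ #S * (md φ + 1) := card_nbhd_le
      _ ≤ (#(noms φ) + 1) * (md φ + 1) := by
        gcongr
        exact (card_insert_le _ _).trans (Nat.succ_le_succ card_image_le)
  · intro u v hu hv ψ hψ
    have hlt' : ∀ i ∈ noms ψ, η' i < #(nbhd S (md φ)) :=
      fun i hi => hlt i (noms_subset_of_mem_subf hψ hi)
    exact sat_iff_of_forall_lt η' ψ (fun i hi => (hlt' i hi).trans_le hu)
      (fun i hi => (hlt' i hi).trans_le hv)
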